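/- Decay of the Green-function Fourier kernel: let n ≥ 0, w ∈ L¹(ℝᵈ), g ∈ H^{n+3/2+δ₀}_{2+⌈d/2⌉}(ℝᵈ) satisfy the uniform Penrose condition with constant κ, and suppose the inverse-Laplace bound |∂_λⁿ 𝒢ʳ̃(iτ,k)| ≤ C ⟨ℏk⟩²|k|^{2−n} / (⟨ℏk⟩²|k|² + τ²) holds for 0 ≤ m ≤ n. Then the inverse Laplace transform 𝒢ʳ̂(t,k) = (2π)^{-1} ∫_ℝ e^{iτt} 𝒢ʳ̃(iτ,k) dτ satisfies |𝒢ʳ̂(t,k)| ≤ C' ⟨ℏk⟩|k| / ⟨kt⟩ⁿ for all t ≥ 0, k ∈ ℝᵈ, with C' depending only on n, C. -/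

import Mathlib

open MeasureTheory Real Complex

noncomputable section

abbrev Ed (d : ℕ) := EuclideanSpace ℝ (Fin d)

/-- The Japanese bracket `⟨x⟩ = (1+|x|²)^{1/2}` of a vector. -/
def jap {d : ℕ} (ξ : Ed d) : ℝ := Real.sqrt (1 + ‖ξ‖ ^ 2)

/-- The inverse Laplace transform of `𝒢ʳ̃` along the imaginary axis:
`𝒢ʳ̂(t,k) = (2π)^{-1} ∫_ℝ e^{iτt} 𝒢ʳ̃(iτ,k) dτ`. -/
def invLaplace (d : ℕ) (Gtilde : ℂ → Ed d → ℂ) (t : ℝ) (k : Ed d) : ℂ :=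
  ((2 * π : ℝ) : ℂ)⁻¹ * ∫ τ : ℝ, Complex.exp (Complex.I * (τ : ℝ) * (t : ℝ)) * Gtilde (Complex.I * τ) k

/-!
Put `f τ = 𝒢ʳ̃(iτ,k)`. The integral defining `𝒢ʳ̂(t,k)` is the Fourier transform of `f` at
`-t/2π`, and the Fourier transform of `f⁽ⁿ⁾` is that of `f` times `(-it)ⁿ`. Since
`f⁽ᵐ⁾(τ) = iᵐ ∂_λᵐ𝒢ʳ̃(iτ,k)` is dominated by the Lorentzian `K/(b² + τ²)` with `b = ⟨ℏk⟩|k|`, whose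
integral is `πK/b`, this gives `|t|ⁿ |𝒢ʳ̂(t,k)| ≲ ⟨ℏk⟩|k|¹⁻ⁿ`, and `|𝒢ʳ̂(t,k)| ≲ ⟨ℏk⟩|k|` from
`n = 0`. The first bound is used for `|k|t ≥ 1`, the second for `|k|t ≤ 1`, and
`⟨kt⟩ ≤ 2 max(1, |k|t)`.
-/

open FourierTransform

lemma integrable_inv_sq_add_sq {b : ℝ} (hb : b ≠ 0) :
    Integrable fun τ : ℝ => (b ^ 2 + τ ^ 2)⁻¹ := by
  have h (τ : ℝ) : (b ^ 2 + τ ^ 2)⁻¹ = (b ^ 2)⁻¹ * (1 + (τ / b) ^ 2)⁻¹ := by field_simp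
  simp_rw [h]
  exact (integrable_inv_one_add_sq.comp_div hb).const_mul _

lemma integral_univ_inv_sq_add_sq {b : ℝ} (hb : 0 < b) :
    ∫ τ : ℝ, (b ^ 2 + τ ^ 2)⁻¹ = π / b := by
  have h (τ : ℝ) : (b ^ 2 + τ ^ 2)⁻¹ = (b ^ 2)⁻¹ * (1 + (τ / b) ^ 2)⁻¹ := by field_simp
  simp_rw [h, integral_const_mul, Measure.integral_comp_div (fun x : ℝ => (1 + x ^ 2)⁻¹),
    integral_univ_inv_one_add_sq, abs_of_pos hb, smul_eq_mul]
  field_simp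

section Lorentzian

variable {E : Type*} [NormedAddCommGroup E] {f : ℝ → E} {b K : ℝ}

lemma MeasureTheory.Integrable.of_norm_le_div_sq_add_sq (hf : AEStronglyMeasurable f) (hb : b ≠ 0)
    (hK : ∀ τ, ‖f τ‖ ≤ K / (b ^ 2 + τ ^ 2)) : Integrable f :=
  ((integrable_inv_sq_add_sq hb).const_mul K).mono' hf (.of_forall hK)

lemma integral_norm_le_of_norm_le_div_sq_add_sq (hb : 0 < b)
    (hK : ∀ τ, ‖f τ‖ ≤ K / (b ^ 2 + τ ^ 2)) : ∫ τ, ‖f τ‖ ≤ K * (π / b) := by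
  rw [← integral_univ_inv_sq_add_sq hb, ← integral_const_mul]
  exact integral_mono_of_nonneg (.of_forall fun τ => norm_nonneg _)
    ((integrable_inv_sq_add_sq hb.ne').const_mul K) (.of_forall hK)

end Lorentzian

section Fourier

variable {E : Type*} [NormedAddCommGroup E] [NormedSpace ℂ E]

lemma integral_exp_mul_smul_eq_fourier (f : ℝ → E) (t : ℝ) :
    ∫ τ : ℝ, cexp (I * τ * t) • f τ = 𝓕 f (-(t / (2 * π))) := by
  rw [Real.fourier_real_eq_integral_exp_smul]
  congr 1 with τ
  congr 2
  push_cast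
  field_simp

lemma pow_mul_norm_fourier_le_integral_norm_iteratedDeriv {f : ℝ → E} {n : ℕ}
    (hf : ContDiff ℝ n f)
    (hint : ∀ m ≤ n, Integrable (iteratedDeriv m f)) (w : ℝ) :
    |2 * π * w| ^ n * ‖𝓕 f w‖ ≤ ∫ τ, ‖iteratedDeriv n f τ‖ := by
  have h := congrFun (Real.fourier_iteratedDeriv (N := n) hf
    (fun m hm => hint m (by exact_mod_cast hm)) le_rfl) w
  calc |2 * π * w| ^ n * ‖𝓕 f w‖ = ‖𝓕 (iteratedDeriv n f) w‖ := by
        rw [h, norm_smul, norm_pow]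
        simp [abs_of_pos pi_pos]
    _ ≤ ∫ τ, ‖iteratedDeriv n f τ‖ := by
        rw [Real.fourier_eq]
        exact (norm_integral_le_integral_norm _).trans_eq (by simp_rw [Circle.norm_smul])

variable [CompleteSpace E] {g : ℂ → E}

lemma Differentiable.contDiff_comp_I_mul (hg : Differentiable ℂ g) {n : WithTop ℕ∞} :
    ContDiff ℝ n fun τ : ℝ => g (I * τ) :=
  (hg.contDiff.restrict_scalars ℝ).comp (contDiff_const.mul ofRealCLM.contDiff)

lemma Differentiable.iteratedDeriv_comp_I_mul (hg : Differentiable ℂ g) (m : ℕ) :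
    iteratedDeriv m (fun τ : ℝ => g (I * τ)) = fun τ : ℝ => I ^ m • iteratedDeriv m g (I * τ) := by
  induction m with
  | zero => simp
  | succ m ih =>
    ext τ
    have hG : HasDerivAt (iteratedDeriv m g) (iteratedDeriv (m + 1) g (I * τ)) (I * τ) := by
      rw [iteratedDeriv_succ]
      exact (hg.contDiff.differentiable_iteratedDeriv m (WithTop.coe_lt_top _) _).hasDerivAt
    have hI : HasDerivAt (fun τ : ℝ => I * (τ : ℂ)) I τ := by
      simpa using (ofRealCLM.hasDerivAt (x := τ)).const_mul I
    rw [iteratedDeriv_succ, ih, pow_succ, mul_smul]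
    exact ((hG.scomp τ hI).const_smul (I ^ m)).deriv

lemma abs_pow_mul_norm_integral_exp_mul_smul_le (hg : Differentiable ℂ g) {b : ℝ} (hb : 0 < b)
    {K : ℕ → ℝ} {n : ℕ}
    (hK : ∀ m ≤ n, ∀ τ : ℝ, ‖iteratedDeriv m g (I * τ)‖ ≤ K m / (b ^ 2 + τ ^ 2)) (t : ℝ) :
    |t| ^ n * ‖∫ τ : ℝ, cexp (I * τ * t) • g (I * τ)‖ ≤ K n * (π / b) := by
  have hnorm (m : ℕ) (τ : ℝ) :
      ‖iteratedDeriv m (fun τ : ℝ => g (I * τ)) τ‖ = ‖iteratedDeriv m g (I * τ)‖ := by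
    simp [hg.iteratedDeriv_comp_I_mul, norm_smul]
  have hint (m : ℕ) (hm : m ≤ n) : Integrable (iteratedDeriv m fun τ : ℝ => g (I * τ)) :=
    .of_norm_le_div_sq_add_sq
      (hg.contDiff_comp_I_mul.continuous_iteratedDeriv m le_top).aestronglyMeasurable hb.ne'
      fun τ => (hnorm m τ).trans_le (hK m hm τ)
  calc |t| ^ n * ‖∫ τ : ℝ, cexp (I * τ * t) • g (I * τ)‖
      = |2 * π * -(t / (2 * π))| ^ n * ‖𝓕 (fun τ : ℝ => g (I * τ)) (-(t / (2 * π)))‖ := by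
        rw [integral_exp_mul_smul_eq_fourier, show 2 * π * -(t / (2 * π)) = -t by field_simp,
          abs_neg]
    _ ≤ ∫ τ, ‖iteratedDeriv n (fun τ : ℝ => g (I * τ)) τ‖ :=
        pow_mul_norm_fourier_le_integral_norm_iteratedDeriv hg.contDiff_comp_I_mul hint _
    _ ≤ K n * (π / b) := integral_norm_le_of_norm_le_div_sq_add_sq hb
        fun τ => (hnorm n τ).trans_le (hK n le_rfl τ)

lemma max_pow_mul_norm_integral_exp_mul_smul_le (hg : Differentiable ℂ g) {n : ℕ}
    {C a κ : ℝ} (ha : 0 < a) (hκ : 0 < κ)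
    (hK : ∀ m ≤ n, ∀ τ : ℝ, ‖iteratedDeriv m g (I * τ)‖
      ≤ C * a ^ 2 * κ ^ ((2 : ℝ) - m) / (a ^ 2 * κ ^ 2 + τ ^ 2)) (t : ℝ) :
    max 1 (κ * |t|) ^ n * ‖∫ τ : ℝ, cexp (I * τ * t) • g (I * τ)‖ ≤ π * (C * a * κ) := by
  have hbound (N : ℕ) (hN : N ≤ n) := abs_pow_mul_norm_integral_exp_mul_smul_le hg
    (mul_pos ha hκ) (K := fun m => C * a ^ 2 * κ ^ ((2 : ℝ) - m)) (n := N)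
    (fun m hm τ => by rw [mul_pow]; exact hK m (hm.trans hN) τ) t
  have hconst (N : ℕ) :
      C * a ^ 2 * κ ^ ((2 : ℝ) - N) * (π / (a * κ)) = π * (C * a * κ) / κ ^ N := by
    rw [Real.rpow_sub hκ, Real.rpow_two, Real.rpow_natCast]
    field_simp
  rcases le_total (κ * |t|) 1 with hsmall | hlarge
  · have h0 := hbound 0 (Nat.zero_le n)
    rw [hconst, pow_zero, pow_zero, div_one] at h0
    rwa [max_eq_left hsmall, one_pow]
  · rw [max_eq_right hlarge, mul_pow, mul_assoc, ← le_div_iff₀' (by positivity), ← hconst]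
    exact hbound n le_rfl

end Fourier

lemma jap_pos {d : ℕ} (ξ : Ed d) : 0 < jap ξ :=
  Real.sqrt_pos.2 (by positivity)

lemma sqrt_one_add_sq_le_two_mul_max {x : ℝ} (hx : 0 ≤ x) : √(1 + x ^ 2) ≤ 2 * max 1 x := by
  rw [Real.sqrt_le_iff]
  constructor
  · positivity
  · nlinarith [le_max_left 1 x, le_max_right 1 x]

/-- Decay of the Green-function Fourier kernel: if
`|∂_λᵐ 𝒢ʳ̃(iτ,k)| ≤ C ⟨ℏk⟩²|k|^{2−m}/(⟨ℏk⟩²|k|²+τ²)` for all `0 ≤ m ≤ n`, then the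
inverse Laplace transform satisfies `|𝒢ʳ̂(t,k)| ≤ C' ⟨ℏk⟩|k|/⟨kt⟩ⁿ` for all `t ≥ 0`,
`k ∈ ℝᵈ`, with `C'` depending only on `n, C`. -/
theorem green_function_decay (n : ℕ) (C : ℝ) (hC : 0 < C) :
    ∃ C' : ℝ, 0 < C' ∧ ∀ (d : ℕ), 1 ≤ d → ∀ (hbar : ℝ), 0 < hbar → hbar ≤ 1 →
      ∀ (Gtilde : ℂ → Ed d → ℂ),
      (∀ k : Ed d, Differentiable ℂ (fun lam => Gtilde lam k)) →
      (∀ m : ℕ, m ≤ n → ∀ (τ : ℝ) (k : Ed d),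
        ‖iteratedDeriv m (fun lam => Gtilde lam k) (Complex.I * τ)‖
          ≤ C * (jap (hbar • k)) ^ 2 * ‖k‖ ^ ((2 : ℝ) - m)
              / ((jap (hbar • k)) ^ 2 * ‖k‖ ^ 2 + τ ^ 2)) →
      ∀ (t : ℝ), 0 ≤ t → ∀ k : Ed d,
        ‖invLaplace d Gtilde t k‖
          ≤ C' * jap (hbar • k) * ‖k‖ / Real.sqrt (1 + ‖k‖ ^ 2 * t ^ 2) ^ (n : ℝ) := by
  refine ⟨C * 2 ^ n, by positivity, ?_⟩
  intro d _ hbar _ _ G hG hder t ht k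
  have ha := jap_pos (hbar • k)
  rcases eq_or_ne k 0 with rfl | hk
  · have hG0 (τ : ℝ) : G (I * τ) 0 = 0 := by simpa using hder 0 (Nat.zero_le n) τ 0
    simp only [invLaplace, hG0, mul_zero, integral_zero, norm_zero]
    positivity
  have hI := max_pow_mul_norm_integral_exp_mul_smul_le (hG k) ha (norm_pos_iff.2 hk)
    (fun m hm τ => hder m hm τ k) t
  simp only [smul_eq_mul, abs_of_nonneg ht] at hI
  set M := max 1 (‖k‖ * t)
  have hM : 1 ≤ M := le_max_left _ _
  have hsqrt : √(1 + ‖k‖ ^ 2 * t ^ 2) ≤ 2 * M := by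
    rw [← mul_pow]; exact sqrt_one_add_sq_le_two_mul_max (by positivity)
  rw [invLaplace, norm_mul, norm_inv, Complex.norm_real, Real.norm_of_nonneg (by positivity),
    Real.rpow_natCast]
  calc (2 * π)⁻¹ * ‖∫ τ : ℝ, cexp (I * τ * t) * G (I * τ) k‖
      ≤ (2 * π)⁻¹ * (π * (C * jap (hbar • k) * ‖k‖) / M ^ n) := by
        gcongr
        exact (le_div_iff₀' (by positivity)).2 hI
    _ = C * jap (hbar • k) * ‖k‖ / (2 * M ^ n) := by field_simp
    _ ≤ C * jap (hbar • k) * ‖k‖ / M ^ n := by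
        gcongr
        linarith [pow_pos (zero_lt_one.trans_le hM) n]
    _ = C * 2 ^ n * jap (hbar • k) * ‖k‖ / (2 * M) ^ n := by
        rw [mul_pow]
        field_simp
    _ ≤ C * 2 ^ n * jap (hbar • k) * ‖k‖ / √(1 + ‖k‖ ^ 2 * t ^ 2) ^ n := by
        gcongr
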